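/- Let L ≥ 1 be an integer and let 0 < δ < 35. Let g_i, g_j ∈ ℝ_+^T be entrywise nonnegative vectors such that for every ℓ ∈ {0,…,L−1}, the shifted vectors S_ℓᵀ g_i and S_ℓᵀ g_j are nonzero and max( cos(g_i, S_ℓᵀ g_j), cos(S_ℓᵀ g_i, g_j) ) ≤ 1 − δ. Let m = min_{ℓ ∈ {0,…,L−1}} min( ‖S_ℓᵀ g_i‖₂, ‖S_ℓᵀ g_j‖₂ ), and let g̃_i, g̃_j ∈ ℝ^T satisfy ‖g̃_i − g_i‖₂ ≤ (δ/70) m and ‖g̃_j − g_j‖₂ ≤ (δ/70) m. Then cos_L(g̃_i, g̃_j) ≤ 1 − δ/2; that is, noisy versions of two rows that are not shifted variants of one another remain separated in L-shift similarity. -/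

import Mathlib

open Matrix BigOperators

noncomputable section

/-- The `T × T` shift matrix `S_τ` with ones on the `τ`-th upper diagonal. -/
def shiftMat (T τ : ℕ) : Matrix (Fin T) (Fin T) ℝ :=
  Matrix.of fun i j => if (j : ℕ) = (i : ℕ) + τ then 1 else 0

/-- Right shift with zero padding: `(S_τᵀ x)_j = x_{j-τ}`. -/
def shift {T : ℕ} (τ : ℕ) (x : Fin T → ℝ) : Fin T → ℝ :=
  (shiftMat T τ)ᵀ.mulVec x

/-- Euclidean dot product. -/
def dot {T : ℕ} (u v : Fin T → ℝ) : ℝ := ∑ i, u i * v i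

/-- Euclidean norm. -/
def enorm' {T : ℕ} (u : Fin T → ℝ) : ℝ := Real.sqrt (∑ i, u i ^ 2)

open Classical in
/-- Cosine of the angle between two vectors, with the convention that it is `0`
if either vector is zero. -/
def vcos {T : ℕ} (u v : Fin T → ℝ) : ℝ :=
  if u = 0 ∨ v = 0 then 0 else dot u v / (enorm' u * enorm' v)

/-- The `L`-shift cosine similarity `cos_L`. -/
def cosL {T : ℕ} (L : ℕ) (u v : Fin T → ℝ) : ℝ :=
  ⨆ ℓ : Fin L, max (vcos (shift (ℓ : ℕ) u) v) (vcos u (shift (ℓ : ℕ) v))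

/-! The cosine of two vectors is the inner product of their normalisations, and normalisation
is Lipschitz away from zero: `‖x/‖x‖ - y/‖y‖‖ ≤ 2‖x - y‖/‖y‖`. Hence perturbing both arguments
by at most `ε` times their norms moves the cosine by at most `4ε`. Shifting is linear and does not
increase norms, so each shifted noisy pair is a relative `δ/70`-perturbation of the corresponding
clean pair, whose cosine is at most `1 - δ`; the noisy cosine is then at most
`1 - δ + 4δ/70 ≤ 1 - δ/2`. -/

open RealInnerProductSpace NormedSpace

section Normalize

variable {V : Type*} [NormedAddCommGroup V] [NormedSpace ℝ V]

lemma norm_normalize_le_one (x : V) : ‖normalize x‖ ≤ 1 := by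
  rcases eq_or_ne x 0 with rfl | hx
  · simp
  · exact (norm_normalize hx).le

lemma norm_normalize_sub_normalize_le (x y : V) (hy : y ≠ 0) :
    ‖normalize x - normalize y‖ ≤ 2 * ‖x - y‖ / ‖y‖ := by
  have hy' : 0 < ‖y‖ := norm_pos_iff.mpr hy
  rcases eq_or_ne x 0 with rfl | hx
  · rw [normalize_zero_eq_zero, zero_sub, norm_neg, norm_normalize hy, zero_sub, norm_neg,
      mul_div_assoc, div_self hy'.ne']
    norm_num
  have hx' : 0 < ‖x‖ := norm_pos_iff.mpr hx
  have hsplit : normalize x - normalize y = ‖y‖⁻¹ • (x - y) + (‖x‖⁻¹ - ‖y‖⁻¹) • x := by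
    simp only [NormedSpace.normalize, smul_sub, sub_smul]; abel
  have hrescale : ‖(‖x‖⁻¹ - ‖y‖⁻¹) • x‖ = |‖y‖ - ‖x‖| / ‖y‖ := by
    have h : (‖x‖⁻¹ - ‖y‖⁻¹) * ‖x‖ = (‖y‖ - ‖x‖) / ‖y‖ := by field_simp
    calc _ = |(‖x‖⁻¹ - ‖y‖⁻¹) * ‖x‖| := by rw [norm_smul, abs_mul, abs_norm, Real.norm_eq_abs]
      _ = _ := by rw [h, abs_div, abs_of_pos hy']
  calc ‖normalize x - normalize y‖
      ≤ ‖‖y‖⁻¹ • (x - y)‖ + ‖(‖x‖⁻¹ - ‖y‖⁻¹) • x‖ := hsplit ▸ norm_add_le _ _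
    _ ≤ ‖x - y‖ / ‖y‖ + ‖x - y‖ / ‖y‖ := by
        rw [hrescale, norm_smul, norm_inv, norm_norm, inv_mul_eq_div]
        gcongr
        rw [abs_sub_comm]
        exact abs_norm_sub_norm_le x y
    _ = 2 * ‖x - y‖ / ‖y‖ := by ring

end Normalize

section InnerProduct

variable {E : Type*} [NormedAddCommGroup E] [InnerProductSpace ℝ E]

lemma inner_normalize_le_add (x y x' y' : E) (hx : x ≠ 0) (hy : y ≠ 0) :
    ⟪normalize x', normalize y'⟫ ≤
      ⟪normalize x, normalize y⟫ + 2 * ‖x' - x‖ / ‖x‖ + 2 * ‖y' - y‖ / ‖y‖ := by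
  have hsplit : ⟪normalize x', normalize y'⟫ = ⟪normalize x, normalize y⟫ +
      ⟪normalize x' - normalize x, normalize y'⟫ + ⟪normalize x, normalize y' - normalize y⟫ := by
    rw [inner_sub_left, inner_sub_right]; ring
  have hx' : ⟪normalize x' - normalize x, normalize y'⟫ ≤ 2 * ‖x' - x‖ / ‖x‖ :=
    calc _ ≤ ‖normalize x' - normalize x‖ * ‖normalize y'‖ := real_inner_le_norm _ _
      _ ≤ ‖normalize x' - normalize x‖ * 1 := by gcongr; exact norm_normalize_le_one y'
      _ ≤ 2 * ‖x' - x‖ / ‖x‖ := by rw [mul_one]; exact norm_normalize_sub_normalize_le x' x hx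
  have hy' : ⟪normalize x, normalize y' - normalize y⟫ ≤ 2 * ‖y' - y‖ / ‖y‖ :=
    calc _ ≤ ‖normalize x‖ * ‖normalize y' - normalize y‖ := real_inner_le_norm _ _
      _ ≤ 1 * ‖normalize y' - normalize y‖ := by gcongr; exact norm_normalize_le_one x
      _ ≤ 2 * ‖y' - y‖ / ‖y‖ := by rw [one_mul]; exact norm_normalize_sub_normalize_le y' y hy
  linarith

end InnerProduct

lemma enorm'_eq_norm {T : ℕ} (u : Fin T → ℝ) : enorm' u = ‖WithLp.toLp 2 u‖ := by
  simp [enorm', EuclideanSpace.norm_eq]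

lemma enorm'_nonneg {T : ℕ} (u : Fin T → ℝ) : 0 ≤ enorm' u := Real.sqrt_nonneg _

lemma dot_eq_inner {T : ℕ} (u v : Fin T → ℝ) : dot u v = ⟪WithLp.toLp 2 u, WithLp.toLp 2 v⟫ := by
  simp [dot, PiLp.inner_apply, mul_comm]

lemma vcos_eq_inner_normalize {T : ℕ} (u v : Fin T → ℝ) :
    vcos u v = ⟪normalize (WithLp.toLp 2 u), normalize (WithLp.toLp 2 v)⟫ := by
  rw [vcos]
  split_ifs with h
  · rcases h with rfl | rfl <;> simp
  · rw [NormedSpace.normalize, NormedSpace.normalize, real_inner_smul_left,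
      real_inner_smul_right, dot_eq_inner, enorm'_eq_norm, enorm'_eq_norm]
    ring

lemma vcos_le_add {T : ℕ} {u v : Fin T → ℝ} (u' v' : Fin T → ℝ) (hu : u ≠ 0) (hv : v ≠ 0) :
    vcos u' v' ≤ vcos u v + 2 * enorm' (u' - u) / enorm' u + 2 * enorm' (v' - v) / enorm' v := by
  simp only [vcos_eq_inner_normalize, enorm'_eq_norm, WithLp.toLp_sub]
  exact inner_normalize_le_add _ _ _ _ (by simpa using hu) (by simpa using hv)

lemma shift_apply {T : ℕ} (τ : ℕ) (x : Fin T → ℝ) (j : Fin T) :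
    shift τ x j = if h : τ ≤ j then x ⟨j - τ, by omega⟩ else 0 := by
  simp only [shift, shiftMat, mulVec, dotProduct, transpose_apply, of_apply, ite_mul, one_mul,
    zero_mul]
  split_ifs with h
  · rw [Finset.sum_eq_single ⟨j - τ, by omega⟩]
    · simp [Nat.sub_add_cancel h]
    · intro i _ hi
      rw [if_neg]
      contrapose! hi
      ext; simp; omega
    · simp
  · exact Finset.sum_eq_zero fun i _ => if_neg (by omega)

@[simp]
lemma shift_zero {T : ℕ} (x : Fin T → ℝ) : shift 0 x = x := by
  ext j; simp [shift_apply]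

lemma shift_sub {T : ℕ} (τ : ℕ) (x y : Fin T → ℝ) : shift τ (x - y) = shift τ x - shift τ y :=
  mulVec_sub _ _ _

lemma enorm'_shift_le {T : ℕ} (τ : ℕ) (x : Fin T → ℝ) : enorm' (shift τ x) ≤ enorm' x := by
  unfold enorm'
  apply Real.sqrt_le_sqrt
  set s := Finset.univ.filter fun j : Fin T => τ ≤ (j : ℕ)
  set e : Fin T → Fin T := fun j => ⟨j - τ, by omega⟩
  have he : ∀ a ∈ s, ∀ b ∈ s, e a = e b → a = b := by
    intro a ha b hb hab
    have ha := (Finset.mem_filter.1 ha).2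
    have hb := (Finset.mem_filter.1 hb).2
    simp only [e, Fin.mk.injEq] at hab
    ext; omega
  calc ∑ j, shift τ x j ^ 2 = ∑ j ∈ s, x (e j) ^ 2 := by
        rw [Finset.sum_filter]
        refine Finset.sum_congr rfl fun j _ => ?_
        rw [shift_apply]
        split_ifs
        · rfl
        · simp
    _ = ∑ i ∈ s.image e, x i ^ 2 := (Finset.sum_image (f := fun i => x i ^ 2) he).symm
    _ ≤ ∑ i, x i ^ 2 := Finset.sum_le_sum_of_subset_of_nonneg (Finset.subset_univ _)
        fun i _ _ => sq_nonneg _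

lemma enorm'_pos {T : ℕ} {u : Fin T → ℝ} (hu : u ≠ 0) : 0 < enorm' u := by
  rw [enorm'_eq_norm]
  exact norm_pos_iff.mpr (by simpa using hu)

lemma vcos_le_of_enorm'_sub_le {T : ℕ} {u v : Fin T → ℝ} (u' v' : Fin T → ℝ) {ε : ℝ}
    (hu : u ≠ 0) (hv : v ≠ 0) (hdu : enorm' (u' - u) ≤ ε * enorm' u)
    (hdv : enorm' (v' - v) ≤ ε * enorm' v) :
    vcos u' v' ≤ vcos u v + 4 * ε := by
  have hu' : 2 * enorm' (u' - u) / enorm' u ≤ 2 * ε := by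
    rw [div_le_iff₀ (enorm'_pos hu)]; linarith
  have hv' : 2 * enorm' (v' - v) / enorm' v ≤ 2 * ε := by
    rw [div_le_iff₀ (enorm'_pos hv)]; linarith
  linarith [vcos_le_add u' v' hu hv]

theorem cosL_noisy_not_shifted_variants_general (T L : ℕ) (hL : 1 ≤ L) (δ : ℝ)
    (hδ0 : 0 < δ)
    (gi gj : Fin T → ℝ)
    (hnz : ∀ ℓ : ℕ, ℓ < L → shift ℓ gi ≠ 0 ∧ shift ℓ gj ≠ 0)
    (hsep : ∀ ℓ : ℕ, ℓ < L →
      max (vcos gi (shift ℓ gj)) (vcos (shift ℓ gi) gj) ≤ 1 - δ)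
    (m : ℝ)
    (hm : m = sInf {c : ℝ | ∃ ℓ : ℕ, ℓ < L ∧
      (c = enorm' (shift ℓ gi) ∨ c = enorm' (shift ℓ gj))})
    (gti gtj : Fin T → ℝ)
    (hi : enorm' (gti - gi) ≤ δ / 70 * m)
    (hj : enorm' (gtj - gj) ≤ δ / 70 * m) :
    cosL L gti gtj ≤ 1 - δ / 2 := by
  have hbdd : BddBelow {c : ℝ | ∃ ℓ : ℕ, ℓ < L ∧
      (c = enorm' (shift ℓ gi) ∨ c = enorm' (shift ℓ gj))} :=
    ⟨0, by rintro c ⟨ℓ, -, rfl | rfl⟩ <;> exact enorm'_nonneg _⟩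
  have hnoise_i (ℓ : ℕ) (hℓ : ℓ < L) :
      enorm' (shift ℓ gti - shift ℓ gi) ≤ δ / 70 * enorm' (shift ℓ gi) := by
    rw [← shift_sub]
    refine (enorm'_shift_le ℓ _).trans (hi.trans ?_)
    gcongr
    exact hm ▸ csInf_le hbdd ⟨ℓ, hℓ, Or.inl rfl⟩
  have hnoise_j (ℓ : ℕ) (hℓ : ℓ < L) :
      enorm' (shift ℓ gtj - shift ℓ gj) ≤ δ / 70 * enorm' (shift ℓ gj) := by
    rw [← shift_sub]
    refine (enorm'_shift_le ℓ _).trans (hj.trans ?_)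
    gcongr
    exact hm ▸ csInf_le hbdd ⟨ℓ, hℓ, Or.inr rfl⟩
  have : Nonempty (Fin L) := ⟨⟨0, hL⟩⟩
  refine ciSup_le fun ℓ => max_le ?_ ?_
  · have h := vcos_le_of_enorm'_sub_le (shift ℓ gti) gtj (hnz ℓ ℓ.2).1
      (by simpa using (hnz 0 hL).2) (hnoise_i ℓ ℓ.2) (by simpa using hnoise_j 0 hL)
    linarith [(le_max_right _ _).trans (hsep ℓ ℓ.2)]
  · have h := vcos_le_of_enorm'_sub_le gti (shift ℓ gtj) (by simpa using (hnz 0 hL).1)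
      (hnz ℓ ℓ.2).2 (by simpa using hnoise_i 0 hL) (hnoise_j ℓ ℓ.2)
    linarith [(le_max_left _ _).trans (hsep ℓ ℓ.2)]

/-- noisy versions of two nonnegative rows that are not shifted variants of
one another remain separated in `L`-shift similarity: `cos_L(g̃ᵢ, g̃ⱼ) ≤ 1 − δ/2`. -/
theorem cosL_noisy_not_shifted_variants (T L : ℕ) (hL : 1 ≤ L) (δ : ℝ)
    (hδ0 : 0 < δ) (hδ : δ < 35)
    (gi gj : Fin T → ℝ) (hgi : ∀ s, 0 ≤ gi s) (hgj : ∀ s, 0 ≤ gj s)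
    (hnz : ∀ ℓ : ℕ, ℓ < L → shift ℓ gi ≠ 0 ∧ shift ℓ gj ≠ 0)
    (hsep : ∀ ℓ : ℕ, ℓ < L →
      max (vcos gi (shift ℓ gj)) (vcos (shift ℓ gi) gj) ≤ 1 - δ)
    (m : ℝ)
    (hm : m = sInf {c : ℝ | ∃ ℓ : ℕ, ℓ < L ∧
      (c = enorm' (shift ℓ gi) ∨ c = enorm' (shift ℓ gj))})
    (gti gtj : Fin T → ℝ)
    (hi : enorm' (gti - gi) ≤ δ / 70 * m)
    (hj : enorm' (gtj - gj) ≤ δ / 70 * m) :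
    cosL L gti gtj ≤ 1 - δ / 2 :=
  cosL_noisy_not_shifted_variants_general T L hL δ hδ0 gi gj hnz hsep m hm gti gtj hi hj

end
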